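/- If the unbarred column word of L has Δ(a) < 0 for some barred a ∈ L|_μ, then Δ(b) = 0 for some barred b ∈ L|_μ. Consequently c_L ≥ 0: c_L has a vanishing factor whenever some factor y_i - y_j satisfies i < j. -/

import Mathlib

open scoped Classical
open MvPolynomial

noncomputable section

namespace EqLR

/-- Ambient polynomial ring `ℂ[x_1,…,x_d ; y_i (i ∈ ℤ)]`.
The variables `x_j` are indexed by `Fin d` (so `x_{j+1} = X (Sum.inl j)`), and the
variables `y_i` are indexed by `ℤ` (only positive indices actually occur). -/
abbrev P (d : ℕ) := MvPolynomial (Fin d ⊕ ℤ) ℂ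

/-- The variable `y_i`. -/
def yI (d : ℕ) (i : ℤ) : P d := X (Sum.inr i)

/-- The variable `x_v` for a value `v ∈ {1,…,d}` (junk value `0` otherwise). -/
def xv (d : ℕ) (v : ℕ) : P d :=
  if h : v - 1 < d then X (Sum.inl ⟨v - 1, h⟩) else 0

/-- The component `ξ_v` of a vector `ξ ∈ ℕ^d`, for a (1-based) value `v ∈ {1,…,d}`. -/
def vecAt {d : ℕ} (ξ : Fin d → ℕ) (v : ℕ) : ℕ :=
  if h : v - 1 < d then ξ ⟨v - 1, h⟩ else 0

/-- `μ ∈ ℕ^d` is a partition:  `μ_1 ≥ μ_2 ≥ … ≥ μ_d`. -/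
def IsPartitionVec {d : ℕ} (μ : Fin d → ℕ) : Prop :=
  ∀ i j : Fin d, i ≤ j → μ j ≤ μ i

/-- `|μ| = μ_1 + ⋯ + μ_d`. -/
def wt {d : ℕ} (μ : Fin d → ℕ) : ℕ := ∑ i, μ i

/-- `ρ = (d-1, d-2, …, 0)`. -/
def rho (d : ℕ) : Fin d → ℕ := fun i => d - 1 - (i : ℕ)

/-- Cells `(r, c)` (both 0-based) of the Young/reverse Young diagram whose row `r` has
length `μ_{r+1}`.  For the reverse diagram, rows are numbered bottom-to-top and columns
right-to-left; for the ordinary Young diagram, top-to-bottom and left-to-right. -/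
def cells (d : ℕ) (μ : Fin d → ℕ) : Finset (ℕ × ℕ) :=
  (Finset.range d ×ˢ Finset.range (Finset.univ.sup μ + 1)).filter
    fun rc => ∃ h : rc.1 < d, rc.2 < μ ⟨rc.1, h⟩

/-- In the column reading word of a *reverse* diagram (columns right-to-left, i.e. in
increasing 0-based column index, each column read top-to-bottom, i.e. in decreasing
0-based row index), the cell `b` is read strictly before the cell `a`. -/
def revBefore (a b : ℕ × ℕ) : Prop := b.2 < a.2 ∨ (b.2 = a.2 ∧ a.1 < b.1)

/-- In the column reading word of an ordinary Young diagram (rightmost column first,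
each column read top-to-bottom), the cell `b` is read strictly before the cell `a`. -/
def youngBefore (a b : ℕ × ℕ) : Prop := a.2 < b.2 ∨ (b.2 = a.2 ∧ b.1 < a.1)

/-- A reverse tableau of shape `μ`: entries in `{1,…,d}`, weakly increasing along rows
(left to right) and strictly increasing down columns (top to bottom). -/
structure RevTableau (d : ℕ) (μ : Fin d → ℕ) where
  val : ℕ × ℕ → ℕ
  mem : ∀ a ∈ cells d μ, 1 ≤ val a ∧ val a ≤ d
  zero : ∀ a ∉ cells d μ, val a = 0
  row : ∀ r c : ℕ, (r, c + 1) ∈ cells d μ → val (r, c + 1) ≤ val (r, c)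
  col : ∀ r c : ℕ, (r + 1, c) ∈ cells d μ → val (r + 1, c) < val (r, c)

/-- The factor `x_v - y_{(d+1-v) + c(a) - r(a)}` attached to an entry of value `v` in
the cell `a` of the reverse diagram (`c(a) = a.2 + 1`, `r(a) = a.1 + 1`, 1-based). -/
def factor (d : ℕ) (v : ℕ) (a : ℕ × ℕ) : P d :=
  xv d v - yI d ((d : ℤ) + 1 - (v : ℤ) + (a.2 : ℤ) - (a.1 : ℤ))

/-- The factorial Schur function `s_μ(x|y) = Σ_R (x|y)^R`. -/
def fSchur (d : ℕ) (μ : Fin d → ℕ) : P d :=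
  ∑ᶠ R : RevTableau d μ, ∏ a ∈ cells d μ, factor d (R.val a) a

/-- The ordinary Schur function `s_μ(x) = Σ_R x^R`. -/
def schurX (d : ℕ) (μ : Fin d → ℕ) : P d :=
  ∑ᶠ R : RevTableau d μ, ∏ a ∈ cells d μ, xv d (R.val a)

/-- The subalgebra `ℂ[y]` of polynomials in the `y` variables only. -/
def ySub (d : ℕ) : Subalgebra ℂ (P d) :=
  Algebra.adjoin ℂ (Set.range fun i : ℤ => yI d i)

/-- `p` is symmetric in the `x` variables. -/
def SymmX {d : ℕ} (p : P d) : Prop :=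
  ∀ σ : Equiv.Perm (Fin d), rename (⇑(Equiv.sumCongr σ (Equiv.refl ℤ))) p = p

/-- The falling factorial power `(x_j | y)^k = (x_j - y_1)⋯(x_j - y_k)`. -/
def ffPow (d : ℕ) (j : Fin d) (k : ℕ) : P d :=
  ∏ i ∈ Finset.range k, (X (Sum.inl j) - yI d ((i : ℤ) + 1))

/-- `(x|y)^ξ = (x_1|y)^{ξ_1} ⋯ (x_d|y)^{ξ_d}`. -/
def xyPow (d : ℕ) (ξ : Fin d → ℕ) : P d := ∏ j : Fin d, ffPow d j (ξ j)

/-- The alternant `a_ξ(x|y) = det[(x_j|y)^{ξ_i}]`. -/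
def aDet (d : ℕ) (ξ : Fin d → ℕ) : P d :=
  Matrix.det (Matrix.of fun i j : Fin d => ffPow d j (ξ i))

/-! ### Skew barred tableaux of shape `λ*μ` -/

/-- A skew barred tableau of shape `λ*μ`: the Young diagram `λ` (placed above and to
the right of the reverse diagram `μ`) is filled with values in `{1,…,d}` (field `top`),
the reverse diagram `μ` is filled with values in `{1,…,d}` (field `bot`), some of whose
cells may be barred (field `barred`); values weakly increase along rows left-to-right
and strictly increase down columns, ignoring bars. -/
structure SkewBarredTableau (d : ℕ) (lam mu : Fin d → ℕ) where
  top : ℕ × ℕ → ℕ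
  bot : ℕ × ℕ → ℕ
  barred : ℕ × ℕ → Prop
  top_mem : ∀ a ∈ cells d lam, 1 ≤ top a ∧ top a ≤ d
  top_zero : ∀ a ∉ cells d lam, top a = 0
  bot_mem : ∀ a ∈ cells d mu, 1 ≤ bot a ∧ bot a ≤ d
  bot_zero : ∀ a ∉ cells d mu, bot a = 0
  barred_sub : ∀ a, barred a → a ∈ cells d mu
  top_row : ∀ r c : ℕ, (r, c + 1) ∈ cells d lam → top (r, c) ≤ top (r, c + 1)
  top_col : ∀ r c : ℕ, (r + 1, c) ∈ cells d lam → top (r, c) < top (r + 1, c)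
  bot_row : ∀ r c : ℕ, (r, c + 1) ∈ cells d mu → bot (r, c + 1) ≤ bot (r, c)
  bot_col : ∀ r c : ℕ, (r + 1, c) ∈ cells d mu → bot (r + 1, c) < bot (r, c)

namespace SkewBarredTableau

variable {d : ℕ} {lam mu : Fin d → ℕ}

/-- `ω(L^u_{<a})_k`: the number of `k`'s among the unbarred entries of `L` read strictly
before the `μ`-cell `a` in the unbarred column word (all of `λ` is read before `μ`). -/
def countBefore (L : SkewBarredTableau d lam mu) (a : ℕ × ℕ) (k : ℕ) : ℕ :=
  ((cells d lam).filter fun b => L.top b = k).card +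
  ((cells d mu).filter fun b => ¬ L.barred b ∧ L.bot b = k ∧ revBefore a b).card

/-- `ω(L^u_{≤a})_k`: as `countBefore`, but the entry of `a` itself is also counted when
`a` is unbarred. -/
def countUpTo (L : SkewBarredTableau d lam mu) (a : ℕ × ℕ) (k : ℕ) : ℕ :=
  ((cells d lam).filter fun b => L.top b = k).card +
  ((cells d mu).filter fun b => ¬ L.barred b ∧ L.bot b = k ∧ (revBefore a b ∨ b = a)).card

/-- Prefix content within the `λ`-part of the word. -/
def topCountUpTo (L : SkewBarredTableau d lam mu) (a : ℕ × ℕ) (k : ℕ) : ℕ :=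
  ((cells d lam).filter fun b => L.top b = k ∧ (youngBefore a b ∨ b = a)).card

/-- `ω(L^u)_k`: total content of the unbarred column word of `L`. -/
def content (L : SkewBarredTableau d lam mu) (k : ℕ) : ℕ :=
  ((cells d lam).filter fun b => L.top b = k).card +
  ((cells d mu).filter fun b => ¬ L.barred b ∧ L.bot b = k).card

/-- The unbarred column word of `L` is Yamanouchi: every prefix contains at least as
many `k`'s as `(k+1)`'s, for every `k ≥ 1`. -/
def Yamanouchi (L : SkewBarredTableau d lam mu) : Prop :=
  (∀ a ∈ cells d lam, ∀ k : ℕ, 1 ≤ k → L.topCountUpTo a (k + 1) ≤ L.topCountUpTo a k) ∧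
  (∀ a ∈ cells d mu, ¬ L.barred a → ∀ k : ℕ, 1 ≤ k →
      L.countUpTo a (k + 1) ≤ L.countUpTo a k)

/-- `L` is an equivariant Littlewood–Richardson skew tableau of shape `λ*μ` and unbarred
content `ν`. -/
def IsLR (L : SkewBarredTableau d lam mu) (ν : Fin d → ℕ) : Prop :=
  L.Yamanouchi ∧ ∀ i : Fin d, L.content ((i : ℕ) + 1) = ν i

/-- The index `|a|' + ω(L^u_{<a})_{|a|}` of the first `y` in the factor of `c_L` at a
barred cell `a`. -/
def eIdx (L : SkewBarredTableau d lam mu) (a : ℕ × ℕ) : ℤ :=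
  ((d : ℤ) + 1 - (L.bot a : ℤ)) + (L.countBefore a (L.bot a) : ℤ)

/-- The index `|a|' + c(a) - r(a)` of the second `y` in the factor of `c_L` at a barred
cell `a`. -/
def fIdx (L : SkewBarredTableau d lam mu) (a : ℕ × ℕ) : ℤ :=
  ((d : ℤ) + 1 - (L.bot a : ℤ)) + (a.2 : ℤ) - (a.1 : ℤ)

/-- The weight `c_L = ∏_{a barred} (y_{|a|'+ω(L^u_{<a})_{|a|}} - y_{|a|'+c(a)-r(a)})`. -/
def cWt (L : SkewBarredTableau d lam mu) : P d :=
  ∏ a ∈ (cells d mu).filter (fun a => L.barred a), (yI d (L.eIdx a) - yI d (L.fIdx a))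

/-- `Δ(a) = ω(L^u_{≤a})_{|a|} - c(a) + r(a)`. -/
def Δ (L : SkewBarredTableau d lam mu) (a : ℕ × ℕ) : ℤ :=
  (L.countUpTo a (L.bot a) : ℤ) - ((a.2 : ℤ) + 1) + ((a.1 : ℤ) + 1)

end SkewBarredTableau

/-! ### Reverse barred tableaux -/

/-- A reverse barred tableau of shape `μ`. -/
structure RevBarredTableau (d : ℕ) (μ : Fin d → ℕ) where
  val : ℕ × ℕ → ℕ
  barred : ℕ × ℕ → Prop
  mem : ∀ a ∈ cells d μ, 1 ≤ val a ∧ val a ≤ d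
  zero : ∀ a ∉ cells d μ, val a = 0
  barred_sub : ∀ a, barred a → a ∈ cells d μ
  row : ∀ r c : ℕ, (r, c + 1) ∈ cells d μ → val (r, c + 1) ≤ val (r, c)
  col : ∀ r c : ℕ, (r + 1, c) ∈ cells d μ → val (r + 1, c) < val (r, c)

namespace RevBarredTableau

variable {d : ℕ} {μ : Fin d → ℕ}

/-- `ω(B^u_{<a})_k`. -/
def countBefore (B : RevBarredTableau d μ) (a : ℕ × ℕ) (k : ℕ) : ℕ :=
  ((cells d μ).filter fun b => ¬ B.barred b ∧ B.val b = k ∧ revBefore a b).card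

/-- `ω(B^u_{≤a})_k` (including `a` itself when unbarred). -/
def countUpTo (B : RevBarredTableau d μ) (a : ℕ × ℕ) (k : ℕ) : ℕ :=
  ((cells d μ).filter fun b => ¬ B.barred b ∧ B.val b = k ∧ (revBefore a b ∨ b = a)).card

/-- `ω(B^u)_k`. -/
def content (B : RevBarredTableau d μ) (k : ℕ) : ℕ :=
  ((cells d μ).filter fun b => ¬ B.barred b ∧ B.val b = k).card

/-- `e_{ξ,B}(a) = (ξ + ω(B^u_{<a}))_{|a|}`. -/
def eIdx (B : RevBarredTableau d μ) (ξ : Fin d → ℕ) (a : ℕ × ℕ) : ℤ :=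
  (vecAt ξ (B.val a) : ℤ) + (B.countBefore a (B.val a) : ℤ)

/-- `f_B(a) = |a|' + c(a) - r(a)`. -/
def fIdx (B : RevBarredTableau d μ) (a : ℕ × ℕ) : ℤ :=
  ((d : ℤ) + 1 - (B.val a : ℤ)) + (a.2 : ℤ) - (a.1 : ℤ)

/-- `c_{ξ,B} = ∏_{a barred} (y_{e_{ξ,B}(a)} - y_{f_B(a)})`. -/
def cXi (B : RevBarredTableau d μ) (ξ : Fin d → ℕ) : P d :=
  ∏ a ∈ (cells d μ).filter (fun a => B.barred a), (yI d (B.eIdx ξ a) - yI d (B.fIdx a))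

/-- The unbarred column word of `λ*B` is Yamanouchi (the `λ`-part is the canonical
filling of `λ`, whose whole content `λ` is added to every prefix of `B^u`). -/
def StarYam (B : RevBarredTableau d μ) (lam : Fin d → ℕ) : Prop :=
  ∀ a ∈ cells d μ, ¬ B.barred a → ∀ k : ℕ, 1 ≤ k →
    vecAt lam (k + 1) + B.countUpTo a (k + 1) ≤ vecAt lam k + B.countUpTo a k

end RevBarredTableau

/-! ### Reverse hatted tableaux -/

/-- A hat decoration: none, left hat, or right hat. -/
inductive Hat where
  | unhatted : Hat
  | left : Hat
  | right : Hat
deriving DecidableEq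

/-- A reverse hatted tableau of shape `μ`. -/
structure RevHattedTableau (d : ℕ) (μ : Fin d → ℕ) where
  val : ℕ × ℕ → ℕ
  hat : ℕ × ℕ → Hat
  mem : ∀ a ∈ cells d μ, 1 ≤ val a ∧ val a ≤ d
  zero : ∀ a ∉ cells d μ, val a = 0
  hat_out : ∀ a ∉ cells d μ, hat a = Hat.unhatted
  row : ∀ r c : ℕ, (r, c + 1) ∈ cells d μ → val (r, c + 1) ≤ val (r, c)
  col : ∀ r c : ℕ, (r + 1, c) ∈ cells d μ → val (r + 1, c) < val (r, c)

namespace RevHattedTableau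

variable {d : ℕ} {μ : Fin d → ℕ}

/-- `ω(H^u_{<a})_k`: content of the unhatted column word of `H` read before `a`. -/
def countBefore (H : RevHattedTableau d μ) (a : ℕ × ℕ) (k : ℕ) : ℕ :=
  ((cells d μ).filter fun b => H.hat b = Hat.unhatted ∧ H.val b = k ∧ revBefore a b).card

/-- `ω(H^u)_k`. -/
def content (H : RevHattedTableau d μ) (k : ℕ) : ℕ :=
  ((cells d μ).filter fun b => H.hat b = Hat.unhatted ∧ H.val b = k).card

/-- `e_{ξ,H}(a) = (ξ + ω(H^u_{<a}))_{|a|}`. -/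
def eIdx (H : RevHattedTableau d μ) (ξ : Fin d → ℕ) (a : ℕ × ℕ) : ℤ :=
  (vecAt ξ (H.val a) : ℤ) + (H.countBefore a (H.val a) : ℤ)

/-- `f_H(a) = |a|' + c(a) - r(a)`. -/
def fIdx (H : RevHattedTableau d μ) (a : ℕ × ℕ) : ℤ :=
  ((d : ℤ) + 1 - (H.val a : ℤ)) + (a.2 : ℤ) - (a.1 : ℤ)

/-- `d_{ξ,H} = ∏_{a ∈ H^l} y_{e_{ξ,H}(a)} · ∏_{a ∈ H^r} (-y_{f_H(a)})`. -/
def dWt (H : RevHattedTableau d μ) (ξ : Fin d → ℕ) : P d :=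
  (∏ a ∈ (cells d μ).filter (fun a => H.hat a = Hat.left), yI d (H.eIdx ξ a)) *
  ∏ a ∈ (cells d μ).filter (fun a => H.hat a = Hat.right), (-(yI d (H.fIdx a)))

end RevHattedTableau

/-- `H̄ = B`: `H` unbars to the reverse barred tableau `B`. -/
def UnbarsTo {d : ℕ} {μ : Fin d → ℕ} (H : RevHattedTableau d μ)
    (B : RevBarredTableau d μ) : Prop :=
  H.val = B.val ∧ ∀ a, (H.hat a ≠ Hat.unhatted ↔ B.barred a)

/-- The simple transposition `σ_i` on values: exchanges `i` and `i+1`. -/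
def swapVal (i v : ℕ) : ℕ := if v = i then i + 1 else if v = i + 1 then i else v

/-- The action of `σ_i` on `ℕ^d` by permuting coordinates. -/
def swapVec {d : ℕ} (i : ℕ) (ξ : Fin d → ℕ) : Fin d → ℕ :=
  fun j => vecAt ξ (swapVal i ((j : ℕ) + 1))

/-! ### Reverse (barred) subtableaux -/

/-- A reverse subtableau of shape `μ`: each cell is empty (value `0`) or carries a value
in `{1,…,d}`; no row or column conditions. -/
structure RevSubTableau (d : ℕ) (μ : Fin d → ℕ) where
  val : ℕ × ℕ → ℕ
  mem : ∀ a ∈ cells d μ, val a ≤ d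
  zero : ∀ a ∉ cells d μ, val a = 0

/-- A reverse barred subtableau of shape `μ`: a reverse subtableau some of whose filled
cells are barred. -/
structure RevBarredSubTableau (d : ℕ) (μ : Fin d → ℕ) where
  val : ℕ × ℕ → ℕ
  barred : ℕ × ℕ → Prop
  mem : ∀ a ∈ cells d μ, val a ≤ d
  zero : ∀ a ∉ cells d μ, val a = 0
  barred_filled : ∀ a, barred a → a ∈ cells d μ ∧ val a ≠ 0

/-- `(x|y)^R` for a reverse subtableau `R`. -/
def RevSubTableau.xyProd {d : ℕ} {μ : Fin d → ℕ} (R : RevSubTableau d μ) : P d :=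
  ∏ a ∈ (cells d μ).filter (fun a => R.val a ≠ 0), factor d (R.val a) a

namespace RevBarredSubTableau

variable {d : ℕ} {μ : Fin d → ℕ}

/-- `ω(B^u_{<a})_k`: unbarred filled entries of value `k` read before `a`. -/
def countBefore (B : RevBarredSubTableau d μ) (a : ℕ × ℕ) (k : ℕ) : ℕ :=
  ((cells d μ).filter fun b => ¬ B.barred b ∧ B.val b = k ∧ revBefore a b).card

/-- `ω(B^u)_k`. -/
def content (B : RevBarredSubTableau d μ) (k : ℕ) : ℕ :=
  ((cells d μ).filter fun b => ¬ B.barred b ∧ B.val b = k).card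

/-- `e_{ξ,B}(a) = (ξ + ω(B^u_{<a}))_{|a|}`. -/
def eIdx (B : RevBarredSubTableau d μ) (ξ : Fin d → ℕ) (a : ℕ × ℕ) : ℤ :=
  (vecAt ξ (B.val a) : ℤ) + (B.countBefore a (B.val a) : ℤ)

/-- `f_B(a) = |a|' + c(a) - r(a)`. -/
def fIdx (B : RevBarredSubTableau d μ) (a : ℕ × ℕ) : ℤ :=
  ((d : ℤ) + 1 - (B.val a : ℤ)) + (a.2 : ℤ) - (a.1 : ℤ)

/-- `c_{ξ,B}`. -/
def cXi (B : RevBarredSubTableau d μ) (ξ : Fin d → ℕ) : P d :=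
  ∏ a ∈ (cells d μ).filter (fun a => B.barred a), (yI d (B.eIdx ξ a) - yI d (B.fIdx a))

end RevBarredSubTableau

end EqLR

/-!
Write `Δ'(b) = ω(L^u_{<b})_{|b|} - c(b) + r(b)`; it equals `Δ(b)` at barred `b`, and there it is
also the difference `i - j` of the factor `y_i - y_j` of `c_L`. Walk along the row of a barred
cell `a` with `Δ(a) < 0`. In the first column `Δ'` is nonnegative. One step to the right, the
entry weakly decreases, so by the Yamanouchi property its count in the prefix does not drop, and
`c` grows by one: `Δ'` drops by at most one, and not at all past an unbarred cell, whose own letter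
joins the prefix. Hence the cell just before `Δ'` first turns negative is barred with `Δ = 0`.
-/

lemma Int.exists_eq_zero_of_sub_one_le {f : ℕ → ℤ} {n : ℕ} (h₀ : 0 ≤ f 0) (hn : f n < 0)
    (hstep : ∀ j < n, f j - 1 ≤ f (j + 1)) : ∃ j < n, f j = 0 ∧ f (j + 1) < 0 := by
  induction n with
  | zero => omega
  | succ n ih =>
    by_cases hfn : f n < 0
    · obtain ⟨j, hj, hfj⟩ := ih hfn fun j hj => hstep j (by omega)
      exact ⟨j, by omega, hfj⟩
    · exact ⟨n, by omega, by have := hstep n (by omega); omega, hn⟩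

namespace EqLR

section

variable {d : ℕ} {lam mu : Fin d → ℕ}

lemma mem_cells {μ : Fin d → ℕ} {a : ℕ × ℕ} :
    a ∈ cells d μ ↔ ∃ h : a.1 < d, a.2 < μ ⟨a.1, h⟩ := by
  refine ⟨fun h => (Finset.mem_filter.mp h).2, fun ⟨h₁, h₂⟩ => Finset.mem_filter.mpr
    ⟨Finset.mem_product.mpr ⟨Finset.mem_range.mpr h₁, Finset.mem_range.mpr ?_⟩, h₁, h₂⟩⟩
  exact h₂.trans_le ((Finset.le_sup (Finset.mem_univ _)).trans (Nat.le_succ _))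

lemma mem_cells_of_le {μ : Fin d → ℕ} {r j j' : ℕ} (h : (r, j') ∈ cells d μ) (hj : j ≤ j') :
    (r, j) ∈ cells d μ := by
  obtain ⟨h₁, h₂⟩ := mem_cells.mp h
  exact mem_cells.mpr ⟨h₁, hj.trans_lt h₂⟩

def revKey (a : ℕ × ℕ) : ℕ ×ₗ ℕᵒᵈ := toLex (a.2, OrderDual.toDual a.1)

lemma revBefore_iff_revKey_lt {a b : ℕ × ℕ} : revBefore a b ↔ revKey b < revKey a := by
  simp only [revBefore, revKey, Prod.Lex.toLex_lt_toLex, OrderDual.toDual_lt_toDual]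

lemma revBefore_irrefl (a : ℕ × ℕ) : ¬ revBefore a a := by
  rw [revBefore]
  omega

lemma revKey_injective : Function.Injective revKey := by
  intro a b h
  simp only [revKey, toLex_inj, Prod.mk.injEq, OrderDual.toDual_inj] at h
  exact Prod.ext h.2 h.1

lemma exists_last_revBefore {s : Finset (ℕ × ℕ)} (hs : s.Nonempty) :
    ∃ b ∈ s, ∀ c ∈ s, c = b ∨ revBefore b c := by
  obtain ⟨b, hb, hmax⟩ := s.exists_max_image revKey hs
  refine ⟨b, hb, fun c hc => ?_⟩
  rw [revBefore_iff_revKey_lt]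
  exact (eq_or_lt_of_le (hmax c hc)).imp_left (fun h => revKey_injective h)

namespace SkewBarredTableau

variable (L : SkewBarredTableau d lam mu)

def ΔBefore (a : ℕ × ℕ) : ℤ :=
  (L.countBefore a (L.bot a) : ℤ) - a.2 + a.1

lemma countUpTo_of_barred {a : ℕ × ℕ} (ha : L.barred a) (m : ℕ) :
    L.countUpTo a m = L.countBefore a m := by
  unfold countUpTo countBefore
  congr 2
  refine Finset.filter_congr fun b _ => ?_
  constructor
  · rintro ⟨hb, hm, hab | rfl⟩
    exacts [⟨hb, hm, hab⟩, absurd ha hb]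
  · exact fun ⟨hb, hm, hab⟩ => ⟨hb, hm, Or.inl hab⟩

lemma Δ_of_barred {a : ℕ × ℕ} (ha : L.barred a) : L.Δ a = L.ΔBefore a := by
  rw [Δ, ΔBefore, L.countUpTo_of_barred ha]
  ring

lemma eIdx_sub_fIdx (a : ℕ × ℕ) : L.eIdx a - L.fIdx a = L.ΔBefore a := by
  rw [eIdx, fIdx, ΔBefore]
  ring

lemma card_top_succ_le (hY : L.Yamanouchi) {k : ℕ} (hk : 1 ≤ k) :
    ((cells d lam).filter fun b => L.top b = k + 1).card ≤
      ((cells d lam).filter fun b => L.top b = k).card := by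
  rcases (cells d lam).eq_empty_or_nonempty with hempty | hne
  · simp [hempty]
  obtain ⟨b₀, hb₀, hmax⟩ := (cells d lam).exists_max_image Prod.fst hne
  -- The last letter of the word of `λ` sits in its first column, in its lowest row.
  have hlast : (b₀.1, 0) ∈ cells d lam := mem_cells_of_le (j' := b₀.2) hb₀ (Nat.zero_le _)
  have hall : ∀ m, ((cells d lam).filter fun b => L.top b = m).card =
      L.topCountUpTo (b₀.1, 0) m := fun m => by
    unfold topCountUpTo
    congr 1
    refine Finset.filter_congr fun b hb => ?_
    have := hmax b hb
    simp only [youngBefore, Prod.ext_iff, iff_self_and]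
    omega
  rw [hall, hall]
  exact hY.1 _ hlast k hk

lemma countBefore_eq_countUpTo {a b : ℕ × ℕ} (hab : revBefore a b)
    (hlast : ∀ c ∈ cells d mu, ¬ L.barred c → revBefore a c → c = b ∨ revBefore b c)
    (m : ℕ) : L.countBefore a m = L.countUpTo b m := by
  unfold countBefore countUpTo
  congr 2
  refine Finset.filter_congr fun c hc => ?_
  constructor
  · rintro ⟨hcb, hm, hac⟩
    exact ⟨hcb, hm, (hlast c hc hcb hac).symm⟩
  · rintro ⟨hcb, hm, hbc | rfl⟩
    · exact ⟨hcb, hm, by rw [revBefore] at *; omega⟩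
    · exact ⟨hcb, hm, hab⟩

/-- A prefix ending before `a` is the prefix ending at the last unbarred letter read before `a`,
or else the whole word of `λ`; either way the Yamanouchi condition applies to it. -/
lemma countBefore_succ_le (hY : L.Yamanouchi) (a : ℕ × ℕ) {k : ℕ} (hk : 1 ≤ k) :
    L.countBefore a (k + 1) ≤ L.countBefore a k := by
  set S := (cells d mu).filter fun b => ¬ L.barred b ∧ revBefore a b
  rcases S.eq_empty_or_nonempty with hS | hS
  · have hμ : ∀ m, ((cells d mu).filter
        fun b => ¬ L.barred b ∧ L.bot b = m ∧ revBefore a b) = ∅ := fun m => by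
      refine Finset.filter_eq_empty_iff.mpr fun b hb ⟨hbb, _, hab⟩ => ?_
      have hbS : b ∈ S := Finset.mem_filter.mpr ⟨hb, hbb, hab⟩
      simp [hS] at hbS
    simpa only [countBefore, hμ, Finset.card_empty, add_zero] using L.card_top_succ_le hY hk
  · obtain ⟨b, hb, hlast⟩ := exists_last_revBefore hS
    obtain ⟨hbμ, hbb, hab⟩ := Finset.mem_filter.mp hb
    have hlast' : ∀ c ∈ cells d mu, ¬ L.barred c → revBefore a c → c = b ∨ revBefore b c :=
      fun c hc hcb hac => hlast c (Finset.mem_filter.mpr ⟨hc, hcb, hac⟩)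
    rw [L.countBefore_eq_countUpTo hab hlast', L.countBefore_eq_countUpTo hab hlast']
    exact hY.2 b hbμ hbb k hk

lemma countBefore_antitone (hY : L.Yamanouchi) (a : ℕ × ℕ) {k k' : ℕ} (hk : 1 ≤ k)
    (hkk' : k ≤ k') : L.countBefore a k' ≤ L.countBefore a k := by
  induction k', hkk' using Nat.le_induction with
  | base => exact le_rfl
  | succ n hn ih => exact (L.countBefore_succ_le hY a (hk.trans hn)).trans ih

lemma countBefore_le_succ_col (r j m : ℕ) :
    L.countBefore (r, j) m ≤ L.countBefore (r, j + 1) m := by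
  unfold countBefore
  gcongr with b
  simp only [revBefore]
  omega

lemma countBefore_succ_col_of_not_barred {r j : ℕ} (hrj : (r, j) ∈ cells d mu)
    (hub : ¬ L.barred (r, j)) :
    L.countBefore (r, j) (L.bot (r, j)) + 1 ≤ L.countBefore (r, j + 1) (L.bot (r, j)) := by
  unfold countBefore
  rw [add_assoc]
  gcongr
  rw [← Finset.card_insert_of_notMem (a := (r, j))
    fun h => revBefore_irrefl _ (Finset.mem_filter.mp h).2.2.2]
  refine Finset.card_le_card fun b hb => Finset.mem_filter.mpr ?_
  rcases Finset.mem_insert.mp hb with rfl | hb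
  · exact ⟨hrj, hub, rfl, by rw [revBefore]; omega⟩
  · obtain ⟨hb, hbb, hm, hrb⟩ := Finset.mem_filter.mp hb
    exact ⟨hb, hbb, hm, by rw [revBefore] at hrb ⊢; omega⟩

lemma ΔBefore_succ_col (hY : L.Yamanouchi) {r j : ℕ} (hrj : (r, j + 1) ∈ cells d mu) :
    L.ΔBefore (r, j) - 1 ≤ L.ΔBefore (r, j + 1) ∧
      (¬ L.barred (r, j) → L.ΔBefore (r, j) ≤ L.ΔBefore (r, j + 1)) := by
  have hrj' : (r, j) ∈ cells d mu := mem_cells_of_le hrj (Nat.le_succ j)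
  have hvalue := L.countBefore_antitone hY (r, j + 1) (L.bot_mem _ hrj).1 (L.bot_row r j hrj)
  have hcol := L.countBefore_le_succ_col r j (L.bot (r, j))
  refine ⟨by simp only [ΔBefore]; omega, fun hub => ?_⟩
  have := L.countBefore_succ_col_of_not_barred hrj' hub
  simp only [ΔBefore]
  omega

lemma exists_barred_Δ_eq_zero (hY : L.Yamanouchi) {a : ℕ × ℕ} (ha : a ∈ cells d mu)
    (hab : L.barred a) (hΔ : L.Δ a < 0) : ∃ b ∈ cells d mu, L.barred b ∧ L.Δ b = 0 := by
  have hrow : ∀ j ≤ a.2, (a.1, j) ∈ cells d mu := fun j hj => mem_cells_of_le (j' := a.2) ha hj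
  obtain ⟨j, hj, hzero, hneg⟩ := Int.exists_eq_zero_of_sub_one_le
    (f := fun j => L.ΔBefore (a.1, j)) (n := a.2) (by simp only [ΔBefore]; omega)
    (by simpa [← L.Δ_of_barred hab] using hΔ)
    (fun j hj => (L.ΔBefore_succ_col hY (hrow (j + 1) hj)).1)
  have hbarred : L.barred (a.1, j) := by
    by_contra hub
    have := (L.ΔBefore_succ_col hY (hrow (j + 1) hj)).2 hub
    omega
  exact ⟨(a.1, j), hrow j hj.le, hbarred, (L.Δ_of_barred hbarred).trans hzero⟩

end SkewBarredTableau

end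

theorem delta_neg_implies_zero_general (d : ℕ)
    (lam mu nu : Fin d → ℕ)
    (L : SkewBarredTableau d lam mu) (hL : L.IsLR nu) :
    ((∃ a ∈ cells d mu, L.barred a ∧ L.Δ a < 0) →
      ∃ b ∈ cells d mu, L.barred b ∧ L.Δ b = 0) ∧
    ((∃ a ∈ cells d mu, L.barred a ∧ L.eIdx a < L.fIdx a) →
      ∃ b ∈ cells d mu, L.barred b ∧ L.eIdx b = L.fIdx b) := by
  have hΔ : ∀ a, L.barred a → L.eIdx a - L.fIdx a = L.Δ a := fun a ha => by
    rw [L.eIdx_sub_fIdx, L.Δ_of_barred ha]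
  refine ⟨fun ⟨a, ha, hab, hneg⟩ => L.exists_barred_Δ_eq_zero hL.1 ha hab hneg, ?_⟩
  rintro ⟨a, ha, hab, hlt⟩
  obtain ⟨b, hb, hbb, hzero⟩ :=
    L.exists_barred_Δ_eq_zero hL.1 ha hab (by have := hΔ a hab; omega)
  exact ⟨b, hb, hbb, by have := hΔ b hbb; omega⟩

/-- If `Δ(a) < 0` for some barred `a ∈ L|_μ`, then `Δ(b) = 0` for some
barred `b ∈ L|_μ`.  Consequently `c_L ≥ 0`: whenever some factor `y_i - y_j` of `c_L`
has `i < j`, some factor of `c_L` vanishes. -/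
theorem delta_neg_implies_zero (d : ℕ) (hd : 1 ≤ d)
    (lam mu nu : Fin d → ℕ)
    (hlam : IsPartitionVec lam) (hmu : IsPartitionVec mu) (hnu : IsPartitionVec nu)
    (L : SkewBarredTableau d lam mu) (hL : L.IsLR nu) :
    ((∃ a ∈ cells d mu, L.barred a ∧ L.Δ a < 0) →
      ∃ b ∈ cells d mu, L.barred b ∧ L.Δ b = 0) ∧
    ((∃ a ∈ cells d mu, L.barred a ∧ L.eIdx a < L.fIdx a) →
      ∃ b ∈ cells d mu, L.barred b ∧ L.eIdx b = L.fIdx b) :=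
  delta_neg_implies_zero_general d lam mu nu L hL

end EqLR
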